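/- arXiv:1705.09475 — 7 statements merged into one kernel-verified Lean document; each statement's English description precedes it below -/
import Mathlib

section
/- Let G⁺ be a finite simple graph, let x be a simplicial vertex of G⁺, and let G = G⁺ − x be the graph obtained from G⁺ by deleting x. Then for every real number t ≥ 0, if G⁺ is t-tough then G is t-tough. (In other words, adding a simplicial vertex to a graph does not increase its toughness.) -/
/-- The number of connected components of the subgraph of `G` induced on the
complement of the vertex set `S` (i.e. of `G − S`). -/
noncomputable def numComponents {V : Type*} (G : SimpleGraph V) (S : Set V) : ℕ :=
  Nat.card (G.induce Sᶜ).ConnectedComponent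

/-- A graph `G` is `t`-tough if for every set `S` of vertices whose removal
disconnects the graph, one has `|S| ≥ t · c(G − S)`. -/
def IsTough {V : Type*} (t : ℝ) (G : SimpleGraph V) : Prop :=
  ∀ S : Set V, ¬ (G.induce Sᶜ).Connected → t * (numComponents G S : ℝ) ≤ (S.ncard : ℝ)

/-!
Let `S` be a separating set of `G = G⁺ − x`. Then `G⁺ − S` is `G − S` with the vertex `x` added
back, and `x` merges no two components of `G − S`: a walk entering and leaving `x` can skip it,
because the neighbourhood of `x` is a clique. Hence `S` also separates `G⁺`, into at least as many
components, and `t · c(G − S) ≤ t · c(G⁺ − S) ≤ |S|`.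
-/

namespace SimpleGraph

variable {V W : Type*} {G : SimpleGraph V} {H : SimpleGraph W}

theorem Embedding.reachable_map_iff_of_isClique_neighborSet (φ : G ↪g H) {x : W}
    (hx : H.IsClique (H.neighborSet x)) (hφ : ∀ w, w ≠ x → w ∈ Set.range φ) {u v : V} :
    H.Reachable (φ u) (φ v) ↔ G.Reachable u v := by
  refine ⟨fun ⟨p⟩ => ?_, fun h => h.map φ.toHom⟩
  -- `x` may have no preimage, so along a walk we also track preimages of the neighbours of `x`.
  suffices key : ∀ {a b} (p : H.Walk a b), φ v = b →
      ∀ u, φ u = a ∨ (a = x ∧ H.Adj (φ u) x) → G.Reachable u v from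
    key p rfl u (.inl rfl)
  intro a b p
  induction p with
  | nil =>
    rintro rfl u (hu | ⟨rfl, hux⟩)
    · rw [φ.injective hu]
    · exact (φ.map_adj_iff.1 hux).reachable
  | @cons a c b hac p ih =>
    rintro hv u (rfl | ⟨rfl, hux⟩)
    · by_cases hc : c = x
      · subst hc
        exact ih hv u (.inr ⟨rfl, hac⟩)
      · obtain ⟨d, rfl⟩ := hφ c hc
        exact (φ.map_adj_iff.1 hac).reachable.trans (ih hv d (.inl rfl))
    · obtain ⟨d, rfl⟩ := hφ c (H.ne_of_adj hac).symm
      by_cases hud : u = d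
      · subst hud
        exact ih hv u (.inl rfl)
      · have hadj : H.Adj (φ u) (φ d) := hx hux.symm hac (φ.injective.ne hud)
        exact (φ.map_adj_iff.1 hadj).reachable.trans (ih hv d (.inl rfl))

theorem ConnectedComponent.map_injective_of_reachable (φ : G →g H)
    (hφ : ∀ u v, H.Reachable (φ u) (φ v) → G.Reachable u v) :
    Function.Injective (ConnectedComponent.map φ) := by
  intro c₁ c₂
  refine ConnectedComponent.ind₂ (fun u v h => ?_) c₁ c₂
  simp only [ConnectedComponent.map_mk, ConnectedComponent.eq] at h
  exact ConnectedComponent.sound (hφ u v h)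

theorem isClique_neighborSet_induce {s : Set V} {x : V} (hx : G.IsClique (G.neighborSet x))
    (hxs : x ∈ s) : (G.induce s).IsClique ((G.induce s).neighborSet ⟨x, hxs⟩) :=
  fun _ ha _ hb hab => hx ha hb (Subtype.coe_ne_coe.2 hab)

def induceInduceEmbedding (G : SimpleGraph V) (s : Set V) (S : Set s) :
    (G.induce s).induce Sᶜ ↪g G.induce (Subtype.val '' S)ᶜ where
  toFun u := ⟨u.1.1, by rintro ⟨w, hw, hwu⟩; exact u.2 (Subtype.ext hwu ▸ hw)⟩
  inj' _ _ h := Subtype.ext (Subtype.ext (congrArg Subtype.val h :))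
  map_rel_iff' := Iff.rfl

theorem mem_range_induceInduceEmbedding {s : Set V} {S : Set s} {w : ↥(Subtype.val '' S)ᶜ}
    (hw : w.1 ∈ s) : w ∈ Set.range (G.induceInduceEmbedding s S) :=
  ⟨⟨⟨w.1, hw⟩, fun h => w.2 ⟨_, h, rfl⟩⟩, rfl⟩

end SimpleGraph

open SimpleGraph

/-- Adding a simplicial vertex to a graph does not increase its toughness:
if `x` is a simplicial vertex of the finite graph `G⁺` and `G⁺` is `t`-tough
(`t ≥ 0`), then `G = G⁺ − x` is `t`-tough. -/
theorem deleting_simplicial_vertex_preserves_toughness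
    {V : Type*} [Fintype V] (Gp : SimpleGraph V) (x : V)
    (hsimp : ∀ a b : V, Gp.Adj x a → Gp.Adj x b → a ≠ b → Gp.Adj a b)
    (t : ℝ) (ht : 0 ≤ t) (hGp : IsTough t Gp) :
    IsTough t (Gp.induce {x}ᶜ) := by
  intro S hS
  rcases isEmpty_or_nonempty (Sᶜ : Set _) with hSc | hSc
  · simp [numComponents]
  set S' : Set V := Subtype.val '' S
  have hxS' : x ∉ S' := fun ⟨w, _, hw⟩ => w.2 hw
  let φ := Gp.induceInduceEmbedding {x}ᶜ S
  have hreach : ∀ u v, (Gp.induce S'ᶜ).Reachable (φ u) (φ v) →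
      ((Gp.induce {x}ᶜ).induce Sᶜ).Reachable u v := fun _ _ =>
    (φ.reachable_map_iff_of_isClique_neighborSet
      (isClique_neighborSet_induce (fun a ha b hb => hsimp a b ha hb) hxS')
      (fun _ hw => mem_range_induceInduceEmbedding fun h => hw (Subtype.ext h))).1
  have hS' : ¬ (Gp.induce S'ᶜ).Connected := fun h =>
    hS ⟨fun u v => hreach u v (h.preconnected _ _)⟩
  have hcount : numComponents (Gp.induce {x}ᶜ) S ≤ numComponents Gp S' :=
    Nat.card_le_card_of_injective _ (ConnectedComponent.map_injective_of_reachable φ.toHom hreach)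
  calc t * (numComponents (Gp.induce {x}ᶜ) S : ℝ) ≤ t * (numComponents Gp S' : ℝ) := by gcongr
    _ ≤ S'.ncard := hGp S' hS'
    _ = S.ncard := by rw [Set.ncard_image_of_injective S Subtype.val_injective]
end

section
/- Let t > 0 be a real number. For i = 1, 2, let G⁺ᵢ be a finite simple graph with a vertex vᵢ, let Gᵢ = G⁺ᵢ − vᵢ, and suppose that both G⁺ᵢ and Gᵢ are t-tough. Let U be a graph on the disjoint union of the vertex sets of G₁ and G₂ such that the induced subgraph of U on V(Gᵢ) equals Gᵢ for i = 1, 2, every edge of U joining V(G₁) to V(G₂) joins a vertex of N(v₁) (the neighbourhood of v₁ in G⁺₁) to a vertex of N(v₂) (the neighbourhood of v₂ in G⁺₂), and in U every vertex of N(v₁) has at least t neighbours in N(v₂) and every vertex of N(v₂) has at least t neighbours in N(v₁). Then U is t-tough. -/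
/-!
Write `Sᵢ` for the part of `S` in `V(Gᵢ)`. Every component of `U − S` contains a component of
`G₁ − S₁` or of `G₂ − S₂`, and a component meeting both sides contains one of each, so
`c(U − S) + m ≤ c(G₁ − S₁) + c(G₂ − S₂)`, where `m` counts these mixed components. Toughness of
`Gᵢ` bounds `|Sᵢ|` whenever `c(Gᵢ − Sᵢ) ≠ 1`. If `N(vᵢ) ⊆ Sᵢ`, then `vᵢ` is an extra, isolated
component of `G⁺ᵢ − Sᵢ`, and toughness of `G⁺ᵢ` gives `t · (c(Gᵢ − Sᵢ) + 1) ≤ |Sᵢ|`. Otherwise a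
neighbour of `vᵢ` survives, and when `m = 0` its at least `t` neighbours on the other side all lie
in `S`. A case analysis on which `c(Gᵢ − Sᵢ)` equal `1` combines these bounds.
-/

open SimpleGraph

theorem SimpleGraph.connected_iff_card_connectedComponent_eq_one {V : Type*}
    {G : SimpleGraph V} : G.Connected ↔ Nat.card G.ConnectedComponent = 1 := by
  rw [Nat.card_eq_one_iff_unique]
  refine ⟨fun h => ⟨h.preconnected.subsingleton_connectedComponent, ?_⟩, ?_⟩
  · have := h.nonempty
    infer_instance
  · rintro ⟨hsub, ⟨C⟩⟩
    obtain ⟨v, -⟩ := C.exists_rep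
    have : Nonempty V := ⟨v⟩
    exact ⟨fun x y => ConnectedComponent.exact (Subsingleton.elim _ _)⟩

theorem Set.ncard_range_le {α β : Type*} [Finite α] (f : α → β) :
    (Set.range f).ncard ≤ Nat.card α := by
  rw [← Set.image_univ, ← Set.ncard_univ]
  exact Set.ncard_image_le

theorem Set.ncard_preimage_inl_add_ncard_preimage_inr {α β : Type*} [Finite α] [Finite β]
    (s : Set (α ⊕ β)) : (Sum.inl ⁻¹' s).ncard + (Sum.inr ⁻¹' s).ncard = s.ncard := by
  conv_rhs => rw [← Set.image_preimage_inl_union_image_preimage_inr s]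
  rw [Set.ncard_union_eq Set.disjoint_image_inl_image_inr,
    Set.ncard_image_of_injective _ Sum.inl_injective,
    Set.ncard_image_of_injective _ Sum.inr_injective]

theorem Nat.card_add_ncard_range_inter_range_le {α β γ : Type*} [Finite α] [Finite β]
    {f : α → γ} {g : β → γ} (h : ∀ c, c ∈ Set.range f ∨ c ∈ Set.range g) :
    Nat.card γ + (Set.range f ∩ Set.range g).ncard ≤ Nat.card α + Nat.card β := by
  have hunion : Set.range f ∪ Set.range g = Set.univ := Set.eq_univ_of_forall h
  rw [← Set.ncard_univ, ← hunion,
    Set.ncard_union_add_ncard_inter _ _ (Set.finite_range f) (Set.finite_range g)]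
  exact add_le_add (Set.ncard_range_le f) (Set.ncard_range_le g)

namespace SimpleGraph.Embedding

variable {V V' : Type*} {G : SimpleGraph V} {G' : SimpleGraph V'}

theorem exists_eq_reachable_of_reachable (φ : G' ↪g G)
    (hφ : ∀ x y, G.Adj (φ x) y → y ∈ Set.range φ) {x : V'} {w : V}
    (h : G.Reachable (φ x) w) : ∃ x', φ x' = w ∧ G'.Reachable x x' := by
  rw [reachable_iff_reflTransGen] at h
  induction h with
  | refl => exact ⟨x, rfl, .rfl⟩
  | tail _ hadj ih =>
    obtain ⟨x', rfl, hx'⟩ := ih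
    obtain ⟨x'', rfl⟩ := hφ x' _ hadj
    exact ⟨x'', rfl, hx'.trans (φ.map_adj_iff.mp hadj).reachable⟩

theorem card_connectedComponent_lt [Finite V] (φ : G' ↪g G)
    (hφ : ∀ x y, G.Adj (φ x) y → y ∈ Set.range φ) {w : V} (hw : w ∉ Set.range φ) :
    Nat.card G'.ConnectedComponent < Nat.card G.ConnectedComponent := by
  have hinj : Function.Injective (ConnectedComponent.map φ.toHom) := by
    refine ConnectedComponent.ind₂ fun x y hxy => ?_
    obtain ⟨y', hy', hxy'⟩ :=
      exists_eq_reachable_of_reachable φ hφ (ConnectedComponent.exact hxy)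
    rw [φ.injective hy'] at hxy'
    exact ConnectedComponent.sound hxy'
  have hw' : G.connectedComponentMk w ∉ Set.range (ConnectedComponent.map φ.toHom) := by
    rintro ⟨C, hC⟩
    obtain ⟨x, rfl⟩ := C.exists_rep
    obtain ⟨x', hx', -⟩ :=
      exists_eq_reachable_of_reachable φ hφ (ConnectedComponent.exact hC)
    exact hw ⟨x', hx'⟩
  rw [← Set.ncard_range_of_injective hinj]
  exact Set.ncard_lt_card fun h => hw' (h ▸ Set.mem_univ _)

end SimpleGraph.Embedding

theorem numComponents_add_one_le_of_forall_adj_mem {V : Type*} [Finite V] (G : SimpleGraph V)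
    {v : V} {S : Set ({v}ᶜ : Set V)} (hS : ∀ a : ({v}ᶜ : Set V), G.Adj v a → a ∈ S) :
    numComponents (G.induce {v}ᶜ) S + 1 ≤ numComponents G (Subtype.val '' S) := by
  have hv : v ∉ Subtype.val '' S := fun ⟨a, _, hav⟩ => a.2 hav
  -- `v` is isolated in `G − S`, so `G − v − S` embeds into `G − S` as a union of components.
  let φ : (G.induce {v}ᶜ).induce Sᶜ ↪g G.induce (Subtype.val '' S)ᶜ :=
    { toFun := fun x => ⟨x.1.1, fun ⟨a, ha, hax⟩ => x.2 (Subtype.ext hax ▸ ha)⟩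
      inj' := fun x y h => Subtype.ext (Subtype.ext congr($h.1))
      map_rel_iff' := Iff.rfl }
  have hφ : ∀ x y, (G.induce (Subtype.val '' S)ᶜ).Adj (φ x) y → y ∈ Set.range φ := by
    intro x y hxy
    have hyv : y.1 ≠ v := by
      intro hyv
      have hyx : G.Adj y.1 x.1.1 := hxy.symm
      exact x.2 (hS x.1 (by rwa [hyv] at hyx))
    exact ⟨⟨⟨y.1, hyv⟩, fun hy => y.2 ⟨_, hy, rfl⟩⟩, rfl⟩
  exact φ.card_connectedComponent_lt hφ (w := ⟨v, hv⟩) fun ⟨x, hx⟩ => x.1.2 (congrArg Subtype.val hx)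

theorem IsTough.mul_numComponents_le {V : Type*} {t : ℝ} {G : SimpleGraph V}
    (h : IsTough t G) {S : Set V} (hS : numComponents G S ≠ 1) :
    t * numComponents G S ≤ S.ncard :=
  h S fun hc => hS (connected_iff_card_connectedComponent_eq_one.mp hc)

theorem IsTough.mul_numComponents_add_one_le {V : Type*} [Finite V] {t : ℝ} {G : SimpleGraph V}
    (h : IsTough t G) (ht : 0 ≤ t) {v : V} {S : Set ({v}ᶜ : Set V)}
    (hS : ∀ a : ({v}ᶜ : Set V), G.Adj v a → a ∈ S)
    (hk : numComponents (G.induce {v}ᶜ) S ≠ 0) :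
    t * (numComponents (G.induce {v}ᶜ) S + 1) ≤ S.ncard := by
  have hle := numComponents_add_one_le_of_forall_adj_mem G hS
  calc t * (numComponents (G.induce {v}ᶜ) S + 1)
      ≤ t * numComponents G (Subtype.val '' S) := by gcongr; exact_mod_cast hle
    _ ≤ (Subtype.val '' S).ncard := h.mul_numComponents_le (by omega)
    _ = S.ncard := by rw [Set.ncard_image_of_injective S Subtype.val_injective]

section Gluing

variable {V W₁ W₂ : Type*} {U : SimpleGraph V} {G₁ : SimpleGraph W₁} {G₂ : SimpleGraph W₂}

def SimpleGraph.Hom.mapComponentCompl (f : G₁ →g U) (S : Set V) :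
    (G₁.induce (f ⁻¹' S)ᶜ).ConnectedComponent → (U.induce Sᶜ).ConnectedComponent :=
  ConnectedComponent.map (induceHom f fun _ hx => hx)

def mixedComponents (f₁ : G₁ →g U) (f₂ : G₂ →g U) (S : Set V) :
    Set (U.induce Sᶜ).ConnectedComponent :=
  Set.range (f₁.mapComponentCompl S) ∩ Set.range (f₂.mapComponentCompl S)

theorem numComponents_add_ncard_mixedComponents_le [Finite W₁] [Finite W₂]
    {f₁ : G₁ →g U} {f₂ : G₂ →g U} (hcover : ∀ x, x ∈ Set.range f₁ ∨ x ∈ Set.range f₂)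
    (S : Set V) :
    numComponents U S + (mixedComponents f₁ f₂ S).ncard ≤
      numComponents G₁ (f₁ ⁻¹' S) + numComponents G₂ (f₂ ⁻¹' S) := by
  refine Nat.card_add_ncard_range_inter_range_le fun C => ?_
  obtain ⟨⟨x, hx⟩, rfl⟩ := C.exists_rep
  rcases hcover x with ⟨a, rfl⟩ | ⟨b, rfl⟩
  · exact .inl ⟨(G₁.induce _).connectedComponentMk ⟨a, hx⟩, rfl⟩
  · exact .inr ⟨(G₂.induce _).connectedComponentMk ⟨b, hx⟩, rfl⟩

theorem mixedComponents_nonempty_of_adj {f₁ : G₁ →g U} {f₂ : G₂ →g U} {S : Set V}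
    {a : W₁} {b : W₂} (ha : f₁ a ∉ S) (hb : f₂ b ∉ S) (hab : U.Adj (f₁ a) (f₂ b)) :
    (mixedComponents f₁ f₂ S).Nonempty := by
  refine ⟨(U.induce Sᶜ).connectedComponentMk ⟨f₁ a, ha⟩,
    ⟨(G₁.induce _).connectedComponentMk ⟨a, ha⟩, rfl⟩,
    ⟨(G₂.induce _).connectedComponentMk ⟨b, hb⟩, ?_⟩⟩
  have hab' : (U.induce Sᶜ).Adj ⟨f₁ a, ha⟩ ⟨f₂ b, hb⟩ := hab
  exact (ConnectedComponent.connectedComponentMk_eq_of_adj hab').symm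

end Gluing

/- In the two lemmas below, `c`, `kᵢ`, `m` and `sᵢ` stand for `c(U − S)`, `c(Gᵢ − Sᵢ)`, the number
of mixed components and `|Sᵢ|`, and `Pᵢ` for `N(vᵢ) ⊆ Sᵢ`. -/
theorem mul_le_add_of_gluing_bounds_of_left_eq_one {t s₁ s₂ : ℝ} {c k₁ k₂ m : ℕ} {P₁ P₂ : Prop}
    (ht : 0 ≤ t) (hs₁ : 0 ≤ s₁) (hs₂ : 0 ≤ s₂) (hc : c ≠ 1) (hck : c + m ≤ k₁ + k₂)
    (hk₁ : k₁ = 1) (T₂ : k₂ ≠ 1 → t * k₂ ≤ s₂)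
    (E₁ : P₁ → k₁ ≠ 0 → t * (k₁ + 1) ≤ s₁) (E₂ : P₂ → k₂ ≠ 0 → t * (k₂ + 1) ≤ s₂)
    (D₁ : ¬P₁ → m = 0 → t ≤ s₂) (D₂ : ¬P₂ → m = 0 → t ≤ s₁) :
    t * c ≤ s₁ + s₂ := by
  subst hk₁
  rcases Nat.lt_or_ge k₂ c with hlt | hle
  · obtain ⟨rfl, rfl⟩ : c = k₂ + 1 ∧ m = 0 := by omega
    by_cases hP₁ : P₁
    · have hE₁ : t * 2 ≤ s₁ := by simpa [one_add_one_eq_two] using E₁ hP₁ one_ne_zero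
      have hT₂ : t * (k₂ - 1 : ℝ) ≤ s₂ := by
        by_cases hk₂ : k₂ = 1
        · simpa [hk₂] using hs₂
        · nlinarith [T₂ hk₂]
      push_cast
      linarith
    by_cases hP₂ : P₂
    · exact_mod_cast (E₂ hP₂ (by omega)).trans (le_add_of_nonneg_left hs₁)
    by_cases hk₂ : k₂ = 1
    · subst hk₂
      norm_num
      linarith [D₁ hP₁ rfl, D₂ hP₂ rfl]
    · push_cast
      linarith [T₂ hk₂, D₂ hP₂ rfl]
  · rcases Nat.eq_zero_or_pos c with rfl | hc
    · simpa using add_nonneg hs₁ hs₂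
    · have : t * c ≤ t * k₂ := by gcongr
      linarith [T₂ (by omega)]

theorem mul_le_add_of_gluing_bounds {t s₁ s₂ : ℝ} {c k₁ k₂ m : ℕ} {P₁ P₂ : Prop} (ht : 0 ≤ t)
    (hs₁ : 0 ≤ s₁) (hs₂ : 0 ≤ s₂) (hc : c ≠ 1) (hck : c + m ≤ k₁ + k₂)
    (T₁ : k₁ ≠ 1 → t * k₁ ≤ s₁) (T₂ : k₂ ≠ 1 → t * k₂ ≤ s₂)
    (E₁ : P₁ → k₁ ≠ 0 → t * (k₁ + 1) ≤ s₁) (E₂ : P₂ → k₂ ≠ 0 → t * (k₂ + 1) ≤ s₂)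
    (D₁ : ¬P₁ → m = 0 → t ≤ s₂) (D₂ : ¬P₂ → m = 0 → t ≤ s₁) :
    t * c ≤ s₁ + s₂ := by
  by_cases hk₁ : k₁ = 1
  · exact mul_le_add_of_gluing_bounds_of_left_eq_one ht hs₁ hs₂ hc hck hk₁ T₂ E₁ E₂ D₁ D₂
  by_cases hk₂ : k₂ = 1
  · rw [add_comm]
    exact mul_le_add_of_gluing_bounds_of_left_eq_one ht hs₂ hs₁ hc (by omega) hk₂ T₁ E₂ E₁ D₂ D₁
  have : t * c ≤ t * (k₁ + k₂) := by gcongr; exact_mod_cast (by omega : c ≤ k₁ + k₂)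
  linarith [T₁ hk₁, T₂ hk₂]

theorem gluing_tough_graphs_general
    {V₁ V₂ : Type*} [Fintype V₁] [Fintype V₂] (t : ℝ) (ht : 0 < t)
    (Gp₁ : SimpleGraph V₁) (Gp₂ : SimpleGraph V₂) (v₁ : V₁) (v₂ : V₂)
    (h₁ : IsTough t Gp₁) (h₂ : IsTough t Gp₂)
    (h₁' : IsTough t (Gp₁.induce {v₁}ᶜ)) (h₂' : IsTough t (Gp₂.induce {v₂}ᶜ))
    (U : SimpleGraph ((({v₁}ᶜ : Set V₁)) ⊕ (({v₂}ᶜ : Set V₂))))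
    (hUl : ∀ a b : ({v₁}ᶜ : Set V₁),
      U.Adj (Sum.inl a) (Sum.inl b) ↔ Gp₁.Adj a.1 b.1)
    (hUr : ∀ a b : ({v₂}ᶜ : Set V₂),
      U.Adj (Sum.inr a) (Sum.inr b) ↔ Gp₂.Adj a.1 b.1)
    (hdeg₁ : ∀ a : ({v₁}ᶜ : Set V₁), Gp₁.Adj v₁ a.1 →
      t ≤ (({b : ({v₂}ᶜ : Set V₂) |
        U.Adj (Sum.inl a) (Sum.inr b) ∧ Gp₂.Adj v₂ b.1}).ncard : ℝ))
    (hdeg₂ : ∀ b : ({v₂}ᶜ : Set V₂), Gp₂.Adj v₂ b.1 →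
      t ≤ (({a : ({v₁}ᶜ : Set V₁) |
        U.Adj (Sum.inl a) (Sum.inr b) ∧ Gp₁.Adj v₁ a.1}).ncard : ℝ)) :
    IsTough t U := by
  intro S hS
  let f₁ : Gp₁.induce {v₁}ᶜ →g U := ⟨Sum.inl, (hUl _ _).mpr⟩
  let f₂ : Gp₂.induce {v₂}ᶜ →g U := ⟨Sum.inr, (hUr _ _).mpr⟩
  have hcover : ∀ x, x ∈ Set.range f₁ ∨ x ∈ Set.range f₂ := by
    rintro (a | b)
    exacts [.inl ⟨a, rfl⟩, .inr ⟨b, rfl⟩]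
  have hcross : (mixedComponents f₁ f₂ S).ncard = 0 →
      ∀ a b, U.Adj (.inl a) (.inr b) → .inl a ∈ S ∨ .inr b ∈ S := fun hm a b hab => by
    by_contra! h
    have := (Set.ncard_pos (Set.toFinite _)).mpr
      (mixedComponents_nonempty_of_adj (f₁ := f₁) (f₂ := f₂) h.1 h.2 hab)
    omega
  have D₁ : ¬(∀ a, Gp₁.Adj v₁ a.1 → a ∈ f₁ ⁻¹' S) → (mixedComponents f₁ f₂ S).ncard = 0 →
      t ≤ (f₂ ⁻¹' S).ncard := fun hP hm => by
    push Not at hP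
    obtain ⟨a, hadj, ha⟩ := hP
    have hsub : {b | U.Adj (.inl a) (.inr b) ∧ Gp₂.Adj v₂ b.1} ⊆ f₂ ⁻¹' S :=
      fun b hb => (hcross hm a b hb.1).resolve_left ha
    exact (hdeg₁ a hadj).trans (by exact_mod_cast Set.ncard_le_ncard hsub)
  have D₂ : ¬(∀ b, Gp₂.Adj v₂ b.1 → b ∈ f₂ ⁻¹' S) → (mixedComponents f₁ f₂ S).ncard = 0 →
      t ≤ (f₁ ⁻¹' S).ncard := fun hP hm => by
    push Not at hP
    obtain ⟨b, hadj, hb⟩ := hP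
    have hsub : {a | U.Adj (.inl a) (.inr b) ∧ Gp₁.Adj v₁ a.1} ⊆ f₁ ⁻¹' S :=
      fun a ha => (hcross hm a b ha.1).resolve_right hb
    exact (hdeg₂ b hadj).trans (by exact_mod_cast Set.ncard_le_ncard hsub)
  rw [← Set.ncard_preimage_inl_add_ncard_preimage_inr S]
  push_cast
  exact mul_le_add_of_gluing_bounds ht.le (by positivity) (by positivity)
    (mt connected_iff_card_connectedComponent_eq_one.mpr hS)
    (numComponents_add_ncard_mixedComponents_le hcover S)
    h₁'.mul_numComponents_le h₂'.mul_numComponents_le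
    (h₁.mul_numComponents_add_one_le ht.le) (h₂.mul_numComponents_add_one_le ht.le) D₁ D₂

/-- Gluing two `t`-tough graphs: if `G⁺ᵢ` and `Gᵢ = G⁺ᵢ − vᵢ` are `t`-tough
(`t > 0`), and `U` is obtained from the disjoint union of `G₁` and `G₂` by
adding edges joining `N(v₁)` to `N(v₂)` such that in `U` every vertex of
`N(v₁)` has at least `t` neighbours in `N(v₂)` and vice versa, then `U` is
`t`-tough. -/
theorem gluing_tough_graphs
    {V₁ V₂ : Type*} [Fintype V₁] [Fintype V₂] (t : ℝ) (ht : 0 < t)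
    (Gp₁ : SimpleGraph V₁) (Gp₂ : SimpleGraph V₂) (v₁ : V₁) (v₂ : V₂)
    (h₁ : IsTough t Gp₁) (h₂ : IsTough t Gp₂)
    (h₁' : IsTough t (Gp₁.induce {v₁}ᶜ)) (h₂' : IsTough t (Gp₂.induce {v₂}ᶜ))
    (U : SimpleGraph ((({v₁}ᶜ : Set V₁)) ⊕ (({v₂}ᶜ : Set V₂))))
    (hUl : ∀ a b : ({v₁}ᶜ : Set V₁),
      U.Adj (Sum.inl a) (Sum.inl b) ↔ Gp₁.Adj a.1 b.1)
    (hUr : ∀ a b : ({v₂}ᶜ : Set V₂),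
      U.Adj (Sum.inr a) (Sum.inr b) ↔ Gp₂.Adj a.1 b.1)
    (hcross : ∀ (a : ({v₁}ᶜ : Set V₁)) (b : ({v₂}ᶜ : Set V₂)),
      U.Adj (Sum.inl a) (Sum.inr b) → Gp₁.Adj v₁ a.1 ∧ Gp₂.Adj v₂ b.1)
    (hdeg₁ : ∀ a : ({v₁}ᶜ : Set V₁), Gp₁.Adj v₁ a.1 →
      t ≤ (({b : ({v₂}ᶜ : Set V₂) |
        U.Adj (Sum.inl a) (Sum.inr b) ∧ Gp₂.Adj v₂ b.1}).ncard : ℝ))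
    (hdeg₂ : ∀ b : ({v₂}ᶜ : Set V₂), Gp₂.Adj v₂ b.1 →
      t ≤ (({a : ({v₁}ᶜ : Set V₁) |
        U.Adj (Sum.inl a) (Sum.inr b) ∧ Gp₁.Adj v₁ a.1}).ncard : ℝ)) :
    IsTough t U :=
  gluing_tough_graphs_general t ht Gp₁ Gp₂ v₁ v₂ h₁ h₂ h₁' h₂' U hUl hUr hdeg₁ hdeg₂
end

section
/- The graph T is 3/2-tough, that is, every separating set S of T satisfies |S| ≥ (3/2) · c(T − S). -/
/-- The graph `T` on nine vertices: `0,1,2` are the outer vertices `o₁,o₂,o₃`,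
`3,4,5` are `g₁,g₂,g₃` and `6,7,8` are `w₁,w₂,w₃`. -/
def TGraph : SimpleGraph (Fin 9) :=
  SimpleGraph.fromRel fun a b =>
    (a, b) ∈ ([(0,1),(0,2),(1,2),(3,4),(3,5),(4,5),
      (3,0),(3,1),(4,1),(4,2),(5,2),(5,0),
      (6,0),(6,1),(6,3),(7,1),(7,2),(7,4),
      (8,2),(8,0),(8,5)] : List (Fin 9 × Fin 9))

/-!
Since the independence number of `T` is three, `T − S` has at most three components. `T` is
`3`-connected, and deleting four vertices leaves at most two components: the `oᵢ` and `gᵢ` span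
an octahedron, which is `4`-connected, and each `wᵢ` sits on one of its triangles. Instead of
formalizing these facts, the inequality is checked over all `2⁹` vertex sets, with components
counted by a bitmask flood fill that is proved to compute reachability in the induced subgraph.
-/

open Finset

namespace SimpleGraph

variable {V : Type*} (G : SimpleGraph V)

def expandWithin (s A : Set V) : Set V := A ∪ {v | v ∈ s ∧ ∃ u ∈ A, G.Adj u v}

variable {G}

lemma expandWithin_mono (s : Set V) : Monotone (G.expandWithin s) := by
  rintro A B hAB v (hv | ⟨hvs, u, hu, huv⟩)
  · exact Or.inl (hAB hv)
  · exact Or.inr ⟨hvs, u, hAB hu, huv⟩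

lemma subset_expandWithin (s A : Set V) : A ⊆ G.expandWithin s A := Set.subset_union_left

lemma reachable_of_mem_iterate_expandWithin {s : Set V} {x y : V} (hx : x ∈ s) {k : ℕ}
    (hy : y ∈ (G.expandWithin s)^[k] {x}) :
    ∃ hy' : y ∈ s, (G.induce s).Reachable ⟨x, hx⟩ ⟨y, hy'⟩ := by
  induction k generalizing y with
  | zero =>
    obtain rfl : y = x := hy
    exact ⟨hx, .rfl⟩
  | succ k ih =>
    rw [Function.iterate_succ_apply'] at hy
    obtain hy | ⟨hys, u, hu, huy⟩ := hy
    · exact ih hy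
    · obtain ⟨hus, hxu⟩ := ih hu
      exact ⟨hys, hxu.trans (Adj.reachable (G := G.induce s) (u := ⟨u, hus⟩) huy)⟩

lemma mem_iterate_expandWithin_of_walk {s : Set V} {x y : s} (p : (G.induce s).Walk x y) :
    (y : V) ∈ (G.expandWithin s)^[p.length] {(x : V)} := by
  induction p with
  | nil => rfl
  | @cons a b c hab p ih =>
    rw [Walk.length_cons, Function.iterate_succ_apply]
    have hb : {(b : V)} ⊆ G.expandWithin s {(a : V)} :=
      Set.singleton_subset_iff.2 (Or.inr ⟨b.2, a, rfl, hab⟩)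
    exact (expandWithin_mono s).iterate _ hb ih

lemma mem_iterate_expandWithin_iff [Fintype V] {s : Set V} {x y : V} (hx : x ∈ s) (hy : y ∈ s)
    {k : ℕ} (hk : Fintype.card V ≤ k) :
    y ∈ (G.expandWithin s)^[k] {x} ↔ (G.induce s).Reachable ⟨x, hx⟩ ⟨y, hy⟩ := by
  classical
  refine ⟨fun h => (reachable_of_mem_iterate_expandWithin hx h).2, fun ⟨p⟩ => ?_⟩
  have hlen : p.toPath.1.length ≤ k :=
    (p.toPath.2.length_lt.trans_le (Fintype.card_subtype_le _)).le.trans hk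
  exact (expandWithin_mono s).monotone_iterate_of_le_map (subset_expandWithin s {x}) hlen
    (mem_iterate_expandWithin_of_walk p.toPath.1)

lemma card_connectedComponent_eq_ncard_least {W : Type*} [Finite W] [LinearOrder W]
    (H : SimpleGraph W) :
    Nat.card H.ConnectedComponent = {x | ∀ y, H.Reachable x y → x ≤ y}.ncard := by
  rw [← Nat.card_coe_set_eq]
  refine (Nat.card_eq_of_bijective (fun x : {x | ∀ y, H.Reachable x y → x ≤ y} ↦
    H.connectedComponentMk x) ⟨?_, ?_⟩).symm
  · rintro ⟨x, hx⟩ ⟨y, hy⟩ h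
    have hxy := ConnectedComponent.exact h
    exact Subtype.ext ((hx y hxy).antisymm (hy x hxy.symm))
  · refine ConnectedComponent.ind fun v => ?_
    obtain ⟨x, hx, hmin⟩ := Set.exists_min_image (H.connectedComponentMk v).supp id
      (Set.toFinite _) ⟨v, rfl⟩
    exact ⟨⟨x, fun y hxy => hmin y ((ConnectedComponent.sound hxy).symm.trans hx)⟩, hx⟩

lemma connected_of_card_connectedComponent_eq_one {W : Type*} {H : SimpleGraph W}
    (h : Nat.card H.ConnectedComponent = 1) : H.Connected := by
  obtain ⟨_, ⟨c⟩⟩ := Nat.card_eq_one_iff_unique.1 h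
  obtain ⟨v, -⟩ := c.exists_rep
  exact H.connected_iff_exists_forall_reachable.2
    ⟨v, fun w => ConnectedComponent.exact (Subsingleton.elim _ _)⟩

end SimpleGraph

namespace Bitmask

def bitSet (n m : ℕ) : Set (Fin n) := {v | m.testBit v}

lemma exists_bitSet_eq {n : ℕ} (s : Set (Fin n)) : ∃ A < 2 ^ n, bitSet n A = s := by
  classical
  set B := ∑ i ∈ s.toFinset.map Fin.valEmbedding, 2 ^ i
  refine ⟨B % 2 ^ n, Nat.mod_lt _ (by positivity), Set.ext fun v => ?_⟩
  have hB := Finset.toFinset_bitIndices_sum_two_pow (s.toFinset.map Fin.valEmbedding)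
  simp only [bitSet, Set.mem_ofPred_eq, Nat.testBit_mod_two_pow, v.isLt, decide_true,
    Bool.true_and, ← Nat.mem_bitIndices, ← List.mem_toFinset, B, hB]
  simp [Fin.val_inj]

lemma testBit_foldr_or (l : List ℕ) (i : ℕ) :
    (l.foldr (· ||| ·) 0).testBit i ↔ ∃ a ∈ l, a.testBit i := by
  induction l with
  | nil => simp
  | cons a l ih => simp [Nat.testBit_or, ih]

variable {n : ℕ} (adj : Fin n → ℕ)

def nbrMask (m : ℕ) : ℕ :=
  ((List.finRange n).map fun u : Fin n => if m.testBit u then adj u else 0).foldr (· ||| ·) 0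

def stepMask (A m : ℕ) : ℕ := m ||| (nbrMask adj m &&& A)

def reachMask (A : ℕ) (u : Fin n) : ℕ := (stepMask adj A)^[n] (2 ^ (u : ℕ))

def componentCount (A : ℕ) : ℕ :=
  #{v : Fin n | A.testBit v ∧ ∀ w < v, ¬ (reachMask adj A v).testBit w}

lemma testBit_nbrMask (m i : ℕ) :
    (nbrMask adj m).testBit i ↔ ∃ u : Fin n, m.testBit u ∧ (adj u).testBit i := by
  simp only [nbrMask, testBit_foldr_or, List.mem_map, List.mem_finRange, true_and,
    exists_exists_eq_and]
  refine exists_congr fun u => ?_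
  split_ifs with hu <;> simp [hu]

variable {adj} {G : SimpleGraph (Fin n)}

lemma bitSet_stepMask (hG : ∀ u v : Fin n, (adj u).testBit v ↔ G.Adj u v) (A m : ℕ) :
    bitSet n (stepMask adj A m) = G.expandWithin (bitSet n A) (bitSet n m) := by
  ext v
  simp only [bitSet, stepMask, SimpleGraph.expandWithin, Set.mem_ofPred_eq, Set.mem_union,
    Nat.testBit_or, Nat.testBit_and, Bool.or_eq_true, Bool.and_eq_true, testBit_nbrMask, hG]
  tauto

lemma bitSet_two_pow (u : Fin n) : bitSet n (2 ^ (u : ℕ)) = {u} := by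
  ext v
  simp [bitSet, Nat.testBit_two_pow, Fin.val_inj, eq_comm]

lemma bitSet_reachMask (hG : ∀ u v : Fin n, (adj u).testBit v ↔ G.Adj u v) (A : ℕ)
    (u : Fin n) :
    bitSet n (reachMask adj A u) = (G.expandWithin (bitSet n A))^[n] {u} := by
  have hstep : Function.Semiconj (bitSet n) (stepMask adj A) (G.expandWithin (bitSet n A)) :=
    bitSet_stepMask hG A
  rw [reachMask, hstep.iterate_right n, bitSet_two_pow]

lemma componentCount_eq_card_connectedComponent
    (hG : ∀ u v : Fin n, (adj u).testBit v ↔ G.Adj u v) (A : ℕ) :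
    componentCount adj A = Nat.card (G.induce (bitSet n A)).ConnectedComponent := by
  rw [SimpleGraph.card_connectedComponent_eq_ncard_least,
    ← Set.ncard_image_of_injective _ Subtype.val_injective, componentCount,
    ← Set.ncard_coe_finset]
  congr 1
  ext v
  have hreach (w : Fin n) :
      (reachMask adj A v).testBit w ↔ w ∈ (G.expandWithin (bitSet n A))^[n] {v} := by
    rw [← bitSet_reachMask hG]
    rfl
  simp only [coe_filter, mem_univ, true_and, Set.mem_image, Set.mem_ofPred_eq, hreach]
  constructor
  · rintro ⟨hv, hmin⟩
    refine ⟨⟨v, hv⟩, fun y hy => not_lt.1 fun hyv => hmin y hyv ?_, rfl⟩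
    exact (SimpleGraph.mem_iterate_expandWithin_iff (s := bitSet n A) hv y.2
      (Fintype.card_fin n).le).2 hy
  · rintro ⟨⟨v, hv⟩, hmin, rfl⟩
    refine ⟨hv, fun w hwv hw => ?_⟩
    obtain ⟨hwA, hvw⟩ := SimpleGraph.reachable_of_mem_iterate_expandWithin hv hw
    exact not_le.2 hwv (hmin ⟨w, hwA⟩ hvw)

end Bitmask

open Bitmask

instance : DecidableRel TGraph.Adj := fun _ _ =>
  decidable_of_iff' _ (SimpleGraph.fromRel_adj _ _ _)

def tgraphAdjMask : Fin 9 → ℕ :=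
  ![0b101101110, 0b011011101, 0b110110011, 0b001110011, 0b010101110, 0b100011101,
    0b000001011, 0b000010110, 0b000100101]

lemma testBit_tgraphAdjMask : ∀ u v : Fin 9, (tgraphAdjMask u).testBit v ↔ TGraph.Adj u v := by
  decide

lemma three_mul_componentCount_tgraph_le : ∀ A < 2 ^ 9, componentCount tgraphAdjMask A ≠ 1 →
    3 * componentCount tgraphAdjMask A ≤ 2 * #{v : Fin 9 | ¬ A.testBit v} := by
  decide +kernel

/-- The graph `T` is `3/2`-tough. -/
theorem TGraph_is_three_halves_tough : IsTough (3 / 2) TGraph := by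
  intro S hS
  obtain ⟨A, hA, hAS⟩ := exists_bitSet_eq Sᶜ
  have hcomp : numComponents TGraph S = componentCount tgraphAdjMask A := by
    rw [numComponents, ← hAS, componentCount_eq_card_connectedComponent testBit_tgraphAdjMask]
  have hcard : S.ncard = #{v : Fin 9 | ¬ A.testBit v} := by
    rw [← compl_compl S, ← hAS]
    simp [bitSet, Set.ncard_eq_toFinset_card']
  have hdisconn : componentCount tgraphAdjMask A ≠ 1 := fun h => hS <|
    SimpleGraph.connected_of_card_connectedComponent_eq_one (hcomp.trans h)
  have hbound :
      (3 * componentCount tgraphAdjMask A : ℝ) ≤ 2 * #{v : Fin 9 | ¬ A.testBit v} := by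
    exact_mod_cast three_mul_componentCount_tgraph_le A hA hdisconn
  rw [hcomp, hcard]
  linarith
end

section
/- In the graph T, every pair of vertices of degree 6 (i.e., every pair of the outer vertices o₁, o₂, o₃) is a dominating set of T. Consequently, every separating set of T contains at least two of the vertices o₁, o₂, o₃. -/
instance inst_s4 : DecidableRel TGraph.Adj := fun a b =>
  decidable_of_iff _ (SimpleGraph.fromRel_adj _ a b).symm

lemma TGraph_dom : ∀ i j : Fin 9, (i = 0 ∨ i = 1 ∨ i = 2) → (j = 0 ∨ j = 1 ∨ j = 2) →
    i ≠ j → ∀ v : Fin 9, v ≠ i → v ≠ j → TGraph.Adj v i ∨ TGraph.Adj v j := by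
  intro i j hi hj hij
  rcases hi with rfl | rfl | rfl <;> rcases hj with rfl | rfl | rfl <;>
    first | exact absurd rfl hij | decide

lemma TGraph_outer_adj : ∀ i j : Fin 9, (i = 0 ∨ i = 1 ∨ i = 2) → (j = 0 ∨ j = 1 ∨ j = 2) →
    i ≠ j → TGraph.Adj j i := by
  intro i j hi hj hij
  rcases hi with rfl | rfl | rfl <;> rcases hj with rfl | rfl | rfl <;>
    first | exact absurd rfl hij | decide

/-- Every pair of outer vertices (the vertices of degree 6) of `T` is a
dominating set of `T`; consequently, every separating set of `T` contains at
least two of the outer vertices `0,1,2`. -/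
theorem TGraph_pairs_of_outer_vertices_dominate :
    (∀ i j : Fin 9, i ∈ ({0, 1, 2} : Set (Fin 9)) → j ∈ ({0, 1, 2} : Set (Fin 9)) →
      i ≠ j → ∀ v : Fin 9, v ∉ ({i, j} : Set (Fin 9)) →
        ∃ d ∈ ({i, j} : Set (Fin 9)), TGraph.Adj v d) ∧
    (∀ S : Set (Fin 9), ¬ (TGraph.induce Sᶜ).Connected →
      2 ≤ (S ∩ ({0, 1, 2} : Set (Fin 9))).ncard) := by
  have key : ∀ i j : Fin 9, (i = 0 ∨ i = 1 ∨ i = 2) → (j = 0 ∨ j = 1 ∨ j = 2) →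
      i ≠ j → ∀ S : Set (Fin 9), i ∉ S → j ∉ S → (TGraph.induce Sᶜ).Connected := by
    intro i j hi hj hij S hiS hjS
    have hiC : i ∈ Sᶜ := hiS
    have hjC : j ∈ Sᶜ := hjS
    haveI : Nonempty ↥(Sᶜ) := ⟨⟨i, hiC⟩⟩
    rw [SimpleGraph.connected_iff]
    refine ⟨?_, inferInstance⟩
    have reach : ∀ v : ↥(Sᶜ), (TGraph.induce Sᶜ).Reachable v ⟨i, hiC⟩ := by
      rintro ⟨v, hv⟩
      by_cases hvi : v = i
      · subst hvi; rfl
      by_cases hvj : v = j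
      · subst hvj
        exact SimpleGraph.Adj.reachable (TGraph_outer_adj i v hi hj hij)
      · rcases TGraph_dom i j hi hj hij v hvi hvj with h | h
        · exact SimpleGraph.Adj.reachable h
        · have h1 : (TGraph.induce Sᶜ).Adj ⟨v, hv⟩ ⟨j, hjC⟩ := h
          have h2 : (TGraph.induce Sᶜ).Adj ⟨j, hjC⟩ ⟨i, hiC⟩ :=
            TGraph_outer_adj i j hi hj hij
          exact (h1.reachable).trans h2.reachable
    intro u v
    exact (reach u).trans (reach v).symm
  constructor
  · intro i j hi hj hij v hv
    simp only [Set.mem_insert_iff, Set.mem_singleton_iff, not_or] at hi hj hv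
    rcases TGraph_dom i j hi hj hij v hv.1 hv.2 with h | h
    · exact ⟨i, Or.inl rfl, h⟩
    · exact ⟨j, Or.inr rfl, h⟩
  · intro S hS
    by_contra hlt
    push_neg at hlt
    -- at most one of 0,1,2 is in S, so two are not in S
    have pair : ∀ a b : Fin 9, (a = 0 ∨ a = 1 ∨ a = 2) → (b = 0 ∨ b = 1 ∨ b = 2) →
        a ≠ b → a ∈ S → b ∈ S → False := by
      intro a b ha hb hab haS hbS
      have hsub : ({a, b} : Set (Fin 9)) ⊆ S ∩ ({0, 1, 2} : Set (Fin 9)) := by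
        intro x hx
        rcases hx with rfl | hx
        · exact ⟨haS, by rcases ha with rfl | rfl | rfl <;> simp⟩
        · rcases hx with rfl
          exact ⟨hbS, by rcases hb with rfl | rfl | rfl <;> simp⟩
      have : 2 ≤ (S ∩ ({0, 1, 2} : Set (Fin 9))).ncard := by
        calc 2 = ({a, b} : Set (Fin 9)).ncard := (Set.ncard_pair hab).symm
          _ ≤ _ := Set.ncard_le_ncard hsub (Set.toFinite _)
      omega
    by_cases h0 : (0 : Fin 9) ∈ S
    · have h1 : (1 : Fin 9) ∉ S := fun h => pair 0 1 (by simp) (by simp) (by decide) h0 h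
      have h2 : (2 : Fin 9) ∉ S := fun h => pair 0 2 (by simp) (by simp) (by decide) h0 h
      exact hS (key 1 2 (by simp) (by simp) (by decide) S h1 h2)
    · by_cases h1 : (1 : Fin 9) ∈ S
      · have h2 : (2 : Fin 9) ∉ S := fun h => pair 1 2 (by simp) (by simp) (by decide) h1 h
        exact hS (key 0 2 (by simp) (by simp) (by decide) S h0 h2)
      · exact hS (key 0 1 (by simp) (by simp) (by decide) S h0 h1)
end

section
/- Let r ≥ 1 and let G be a finite simple graph containing r T-regions R₁, …, Rᵣ that all share one common vertex c, which is an outer vertex of each of them, and which are otherwise pairwise vertex-disjoint. Then every cycle of G contains at most 2r + 2 of the 3r simplicial vertices belonging to these T-regions. -/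
open Finset

theorem TGraph.val_lt_six_of_adj {w i : Fin 9} (hw : 6 ≤ w.1) (h : TGraph.Adj w i) : i.1 < 6 := by
  revert w i; simp only [TGraph, SimpleGraph.fromRel_adj]; decide

theorem TGraph.val_lt_three_of_adj_of_adj {w w' i : Fin 9} (hw : 6 ≤ w.1) (hw' : 6 ≤ w'.1)
    (hne : w ≠ w') (h : TGraph.Adj w i) (h' : TGraph.Adj w' i) : i.1 < 3 := by
  revert w w' i; simp only [TGraph, SimpleGraph.fromRel_adj]; decide

namespace SimpleGraph.Walk

variable {V : Type*} {G : SimpleGraph V}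

lemma IsCycle.eq_or_eq_or_eq_of_toSubgraph_adj {u v x₁ x₂ x₃ : V} {C : G.Walk u u}
    (hC : C.IsCycle) (h₁ : C.toSubgraph.Adj v x₁) (h₂ : C.toSubgraph.Adj v x₂)
    (h₃ : C.toSubgraph.Adj v x₃) : x₁ = x₂ ∨ x₁ = x₃ ∨ x₂ = x₃ := by
  by_contra! h
  have hv : v ∈ C.support := C.mem_support_of_adj_toSubgraph h₁
  have htwo := hC.ncard_neighborSet_toSubgraph_eq_two hv
  have := Set.ncard_le_ncard (s := {x₁, x₂, x₃}) (by simp [Set.insert_subset_iff, h₁, h₂, h₃])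
    (Set.finite_of_ncard_ne_zero (htwo ▸ two_ne_zero))
  rw [Set.ncard_eq_three.mpr ⟨x₁, x₂, x₃, h.1, h.2.1, h.2.2, rfl⟩, htwo] at this
  omega

lemma toSubgraph_adj_of_mem_darts {u v : V} {p : G.Walk u v} {d : G.Dart} (hd : d ∈ p.darts) :
    p.toSubgraph.Adj d.fst d.snd :=
  p.adj_toSubgraph_iff_mem_edges.mpr (List.mem_map_of_mem hd)

lemma IsCycle.exists_ne_toSubgraph_adj_of_mem_of_notMem {u y z : V} {C : G.Walk u u}
    (hC : C.IsCycle) {Y : Set V} (hy : y ∈ C.support) (hyY : y ∈ Y)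
    (hNy : ∀ x, C.toSubgraph.Adj y x → x ∈ Y) (hz : z ∈ C.support) (hzY : z ∉ Y) :
    ∃ p q x x', p ≠ q ∧ p ∈ Y ∧ q ∈ Y ∧ x ∉ Y ∧ x' ∉ Y ∧
      C.toSubgraph.Adj p x ∧ C.toSubgraph.Adj q x' := by
  classical
  set D := C.rotate y hy
  have hD : D.toSubgraph = C.toSubgraph := C.toSubgraph_rotate hy
  have hzD : z ∈ D.support := (C.mem_support_rotate_iff y hy).mpr hz
  set P := D.takeUntil z hzD
  set Q := D.dropUntil z hzD
  have hPQ : P.append Q = D := D.take_spec hzD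
  obtain ⟨d, hdP, hdY, hdY'⟩ := P.exists_boundary_dart Y hyY hzY
  obtain ⟨d', hdQ, hdY₂, hdY₂'⟩ := Q.reverse.exists_boundary_dart Y hyY hzY
  have hadj : D.toSubgraph.Adj d.fst d.snd := by
    rw [← hPQ, toSubgraph_append]; exact Or.inl (toSubgraph_adj_of_mem_darts hdP)
  have hadj' : D.toSubgraph.Adj d'.fst d'.snd := by
    rw [← hPQ, toSubgraph_append, ← toSubgraph_reverse Q]
    exact Or.inr (toSubgraph_adj_of_mem_darts hdQ)
  rw [hD] at hadj hadj'
  refine ⟨d.fst, d'.fst, d.snd, d'.snd, ?_, hdY, hdY₂, hdY', hdY₂', hadj, hadj'⟩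
  have hne : d.fst ≠ y := fun h => hdY' (hNy _ (h ▸ hadj))
  have hmem : d.fst ∈ P.support.tail :=
    (P.mem_support_iff.mp (P.dart_fst_mem_support_of_mem_darts hdP)).resolve_left hne
  have hmem' : d'.fst ∈ Q.support.tail := by
    have := Q.reverse.dart_fst_mem_support_of_mem_darts hdQ
    rw [support_reverse, List.mem_reverse] at this
    exact (Q.mem_support_iff.mp this).resolve_left (fun h => hzY (h ▸ hdY₂))
  have hnodup : (P.support.tail ++ Q.support.tail).Nodup := by
    rw [← tail_support_append, hPQ]; exact (hC.rotate hy).support_nodup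
  exact fun h => List.disjoint_of_nodup_append hnodup hmem (h ▸ hmem')

end SimpleGraph.Walk

namespace SimpleGraph

variable {V : Type*} {G : SimpleGraph V}

/-- `f` exhibits a `T`-region of `G`: an induced copy of `T` whose inner vertices (indices `≥ 3`)
have no neighbours outside it. -/
structure IsTRegion (G : SimpleGraph V) (f : Fin 9 → V) : Prop where
  injective : Function.Injective f
  adj_iff : ∀ i j, G.Adj (f i) (f j) ↔ TGraph.Adj i j
  mem_range_of_adj : ∀ i : Fin 9, 3 ≤ i.1 → ∀ v, G.Adj (f i) v → v ∈ Set.range f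

namespace IsTRegion

variable {f : Fin 9 → V} {o : Fin 9} {u : V} {C : G.Walk u u}

lemma mem_image_of_toSubgraph_adj (hR : G.IsTRegion f)
    (hno : ∀ i, i ≠ o → ¬ C.toSubgraph.Adj (f o) (f i)) (ho : o.1 < 3) {i : Fin 9}
    (hi : 3 ≤ i.1) {x : V} (hx : C.toSubgraph.Adj (f i) x) : x ∈ f '' {o}ᶜ := by
  obtain ⟨j, rfl⟩ := hR.mem_range_of_adj i hi x hx.adj_sub
  refine ⟨j, fun hj => hno i ?_ ?_, rfl⟩
  · rintro rfl; omega
  · exact (Set.mem_singleton_iff.mp hj) ▸ hx.symm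

lemma exists_simplicial_toSubgraph_adj_common (hR : G.IsTRegion f) (hC : C.IsCycle)
    (hno : ∀ i, i ≠ o → ¬ C.toSubgraph.Adj (f o) (f i)) (ho : o.1 < 3)
    (hW : ∀ w : Fin 9, 6 ≤ w.1 → f w ∈ C.support) :
    ∃ w w' j : Fin 9, 6 ≤ w.1 ∧ 6 ≤ w'.1 ∧ w ≠ w' ∧ j ≠ o ∧
      C.toSubgraph.Adj (f w) (f j) ∧ C.toSubgraph.Adj (f w') (f j) := by
  set N : Fin 9 → Set V := fun w => C.toSubgraph.neighborSet (f w)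
  set Z : Set V := f '' {i | i.1 < 6 ∧ i ≠ o}
  have hNZ (w : Fin 9) (hw : 6 ≤ w.1) : N w ⊆ Z := by
    intro x hx
    obtain ⟨j, hj, rfl⟩ := hR.mem_image_of_toSubgraph_adj hno ho (by omega) hx
    exact ⟨j, ⟨TGraph.val_lt_six_of_adj hw ((hR.adj_iff w j).mp hx.adj_sub), hj⟩, rfl⟩
  have hZ : Z.ncard ≤ 5 := by
    refine (Set.ncard_image_le (Set.toFinite _)).trans_eq ?_
    rw [Set.ncard_eq_toFinset_card']
    exact (by decide : ∀ o : Fin 9, o.1 < 3 → {i : Fin 9 | i.1 < 6 ∧ i ≠ o}.toFinset.card = 5) o ho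
  by_contra! h
  have hdisj (w w' : Fin 9) (hw : 6 ≤ w.1) (hw' : 6 ≤ w'.1) (hne : w ≠ w') :
      Disjoint (N w) (N w') := by
    refine Set.disjoint_left.mpr fun x hx hx' => ?_
    obtain ⟨j, ⟨-, hj⟩, rfl⟩ := hNZ w hw hx
    exact h w w' j hw hw' hne hj hx hx'
  have hfin (w : Fin 9) (hw : 6 ≤ w.1) : (N w).Finite := (Set.toFinite Z).subset (hNZ w hw)
  have htwo (w : Fin 9) (hw : 6 ≤ w.1) : (N w).ncard = 2 :=
    hC.ncard_neighborSet_toSubgraph_eq_two (hW w hw)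
  have hsix : (N 6 ∪ N 7 ∪ N 8).ncard = 6 := by
    rw [Set.ncard_union_eq _ ((hfin 6 le_rfl).union (hfin 7 (by decide))) (hfin 8 (by decide)),
      Set.ncard_union_eq (hdisj 6 7 le_rfl (by decide) (by decide)) (hfin 6 le_rfl)
        (hfin 7 (by decide)), htwo 6 le_rfl, htwo 7 (by decide), htwo 8 (by decide)]
    exact Disjoint.union_left (hdisj 6 8 le_rfl (by decide) (by decide))
      (hdisj 7 8 (by decide) (by decide) (by decide))
  have hsub : N 6 ∪ N 7 ∪ N 8 ⊆ Z :=
    Set.union_subset (Set.union_subset (hNZ 6 le_rfl) (hNZ 7 (by decide))) (hNZ 8 (by decide))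
  have := Set.ncard_le_ncard hsub (Set.toFinite Z)
  omega

lemma exists_toSubgraph_adj_of_simplicial_mem_support (hR : G.IsTRegion f) (hC : C.IsCycle)
    (ho : o.1 < 3) (hW : ∀ w : Fin 9, 6 ≤ w.1 → f w ∈ C.support) {z : V} (hz : z ∈ C.support)
    (hzf : z ∉ Set.range f) : ∃ i, i ≠ o ∧ C.toSubgraph.Adj (f o) (f i) := by
  by_contra! hno
  have hmem {i : Fin 9} (hi : 3 ≤ i.1) : f i ∈ f '' {o}ᶜ :=
    ⟨i, fun h => by rw [Set.mem_singleton_iff.mp h] at hi; omega, rfl⟩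
  obtain ⟨_, _, x, x', hpq, ⟨ip, hip, rfl⟩, ⟨iq, hiq, rfl⟩, hx, hx', hpx, hqx'⟩ :=
    hC.exists_ne_toSubgraph_adj_of_mem_of_notMem (hW 6 le_rfl) (hmem (by decide))
      (fun _ => hR.mem_image_of_toSubgraph_adj hno ho (by decide)) hz
      (fun h => hzf (Set.image_subset_range _ _ h))
  have hip3 : ip.1 < 3 := by
    by_contra! h; exact hx (hR.mem_image_of_toSubgraph_adj hno ho h hpx)
  have hiq3 : iq.1 < 3 := by
    by_contra! h; exact hx' (hR.mem_image_of_toSubgraph_adj hno ho h hqx')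
  obtain ⟨w, w', j, hw, hw', hww', hjo, hwj, hw'j⟩ :=
    hR.exists_simplicial_toSubgraph_adj_common hC hno ho hW
  have hj3 : j.1 < 3 := TGraph.val_lt_three_of_adj_of_adj hw hw' hww'
    ((hR.adj_iff _ _).mp hwj.adj_sub) ((hR.adj_iff _ _).mp hw'j.adj_sub)
  obtain ⟨y, hy, hjy⟩ : ∃ y ∉ f '' {o}ᶜ, C.toSubgraph.Adj (f j) y := by
    have hne : ip ≠ iq := fun h => hpq (congrArg f h)
    rw [Set.mem_compl_singleton_iff] at hip hiq
    have : j = ip ∨ j = iq := by simp only [ne_eq, Fin.ext_iff] at *; omega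
    rcases this with rfl | rfl
    exacts [⟨x, hx, hpx⟩, ⟨x', hx', hqx'⟩]
  rcases hC.eq_or_eq_or_eq_of_toSubgraph_adj hwj.symm hw'j.symm hjy with h | h | h
  · exact hww' (hR.injective h)
  · exact hy (h ▸ hmem (by omega))
  · exact hy (h ▸ hmem (by omega))

end IsTRegion

variable [DecidableEq V]

theorem Walk.IsCycle.card_filter_forall_simplicial_mem_support_le_two {r : ℕ}
    {φ : Fin r → Fin 9 → V} (hR : ∀ k, G.IsTRegion (φ k)) {c : V} {o : Fin r → Fin 9}
    (ho : ∀ k, (o k).1 < 3) (hoc : ∀ k, φ k (o k) = c)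
    (hdisj : ∀ k l, k ≠ l → Set.range (φ k) ∩ Set.range (φ l) = {c})
    {u : V} {C : G.Walk u u} (hC : C.IsCycle) :
    #{k | ∀ w : Fin 9, 6 ≤ w.1 → φ k w ∈ C.support} ≤ 2 := by
  have hc {k l : Fin r} (hkl : k ≠ l) {i j : Fin 9} (h : φ k i = φ l j) : φ k i = c := by
    have : φ k i ∈ Set.range (φ k) ∩ Set.range (φ l) := ⟨⟨i, rfl⟩, ⟨j, h.symm⟩⟩
    rwa [hdisj k l hkl] at this
  have hio {k : Fin r} {i : Fin 9} (h : φ k i = c) : i = o k :=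
    (hR k).injective (h.trans (hoc k).symm)
  have hadj {k l : Fin r} (hkl : k ≠ l) (hl : ∀ w : Fin 9, 6 ≤ w.1 → φ l w ∈ C.support)
      (hk : ∀ w : Fin 9, 6 ≤ w.1 → φ k w ∈ C.support) :
      ∃ i, i ≠ o k ∧ C.toSubgraph.Adj c (φ k i) := by
    refine hoc k ▸ (hR k).exists_toSubgraph_adj_of_simplicial_mem_support hC (ho k) hk
      (hl 6 le_rfl) ?_
    rintro ⟨i, hi⟩
    have h6 : (6 : Fin 9) = o l := hio (hi ▸ hc hkl hi)
    exact (by decide : ¬ (6 : Fin 9).1 < 3) (h6 ▸ ho l)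
  by_contra! h
  obtain ⟨k₁, hk₁, k₂, hk₂, k₃, hk₃, h₁₂, h₁₃, h₂₃⟩ := two_lt_card.mp h
  simp only [mem_filter, mem_univ, true_and] at hk₁ hk₂ hk₃
  obtain ⟨i₁, hi₁, h₁⟩ := hadj h₁₂ hk₂ hk₁
  obtain ⟨i₂, hi₂, h₂⟩ := hadj h₁₂.symm hk₁ hk₂
  obtain ⟨i₃, -, h₃⟩ := hadj h₁₃.symm hk₁ hk₃
  rcases hC.eq_or_eq_or_eq_of_toSubgraph_adj h₁ h₂ h₃ with h | h | h
  exacts [hi₁ (hio (hc h₁₂ h)), hi₁ (hio (hc h₁₃ h)), hi₂ (hio (hc h₂₃ h))]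

end SimpleGraph

theorem card_filter_simplicial_le (P : Fin 9 → Prop) [DecidablePred P] :
    #{w : Fin 9 | 6 ≤ w.1 ∧ P w} ≤ 2 + if ∀ w : Fin 9, 6 ≤ w.1 → P w then 1 else 0 := by
  have hthree : #{w : Fin 9 | 6 ≤ w.1} = 3 := by decide
  split_ifs with h
  · exact (card_le_card fun w => by simp +contextual).trans hthree.le
  · push Not at h
    obtain ⟨w₀, hw₀, hP⟩ := h
    calc #{w : Fin 9 | 6 ≤ w.1 ∧ P w} ≤ #(({w : Fin 9 | 6 ≤ w.1} : Finset (Fin 9)).erase w₀) := by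
          refine card_le_card fun w hw => ?_
          rw [mem_filter] at hw
          exact mem_erase.mpr ⟨by rintro rfl; exact hP hw.2.2, by simpa using hw.2.1⟩
      _ = 2 + 0 := by rw [card_erase_of_mem (by simpa using hw₀), hthree]

theorem Set.ncard_le_sum_card_filter {ι κ α : Type*} [Fintype ι] [Fintype κ] {s : Set α}
    (φ : ι → κ → α) (P : ι → κ → Prop) [∀ k, DecidablePred (P k)]
    (hs : ∀ v ∈ s, ∃ k i, P k i ∧ φ k i = v) : s.ncard ≤ ∑ k, #{i | P k i} := by
  classical
  set F := (Finset.univ.sigma fun k => ({i | P k i} : Finset κ)).image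
    fun p : (_ : ι) × κ => φ p.1 p.2
  have hsF : s ⊆ F := by
    intro v hv
    obtain ⟨k, i, hP, rfl⟩ := hs v hv
    exact Finset.mem_image.mpr ⟨⟨k, i⟩, by simpa using hP, rfl⟩
  calc s.ncard ≤ (F : Set α).ncard := ncard_le_ncard hsF F.finite_toSet
    _ ≤ ∑ k, #{i | P k i} := by
        rw [ncard_coe_finset, ← Finset.card_sigma]; exact Finset.card_image_le

theorem cycle_misses_simplicial_vertices_of_shared_T_regions_general
    {V : Type*} (G : SimpleGraph V) (r : ℕ)
    (φ : Fin r → Fin 9 → V)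
    (hinj : ∀ k, Function.Injective (φ k))
    (hind : ∀ k i j, G.Adj (φ k i) (φ k j) ↔ TGraph.Adj i j)
    (hclosed : ∀ k, ∀ i : Fin 9, 3 ≤ i.1 → ∀ v, G.Adj (φ k i) v → v ∈ Set.range (φ k))
    (c : V)
    (houter : ∀ k, ∃ i : Fin 9, i.1 < 3 ∧ φ k i = c)
    (hdisj : ∀ k l, k ≠ l → Set.range (φ k) ∩ Set.range (φ l) = {c})
    (u : V) (C : G.Walk u u) (hC : C.IsCycle) :
    {v | v ∈ C.support ∧ ∃ (k : Fin r) (i : Fin 9), 6 ≤ i.1 ∧ v = φ k i}.ncard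
      ≤ 2 * r + 2 := by
  classical
  choose o ho hoc using houter
  have hR (k : Fin r) : G.IsTRegion (φ k) := ⟨hinj k, hind k, hclosed k⟩
  calc _ ≤ ∑ k, #{i : Fin 9 | 6 ≤ i.1 ∧ φ k i ∈ C.support} :=
        Set.ncard_le_sum_card_filter φ (fun k i => 6 ≤ i.1 ∧ φ k i ∈ C.support)
          (by rintro _ ⟨hv, k, i, hi, rfl⟩; exact ⟨k, i, ⟨hi, hv⟩, rfl⟩)
    _ ≤ ∑ k, (2 + if ∀ i : Fin 9, 6 ≤ i.1 → φ k i ∈ C.support then 1 else 0) :=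
        sum_le_sum fun k _ => card_filter_simplicial_le _
    _ = 2 * r + #{k | ∀ i : Fin 9, 6 ≤ i.1 → φ k i ∈ C.support} := by
        rw [sum_add_distrib, sum_const, card_filter, card_univ, Fintype.card_fin, smul_eq_mul,
          mul_comm]
    _ ≤ 2 * r + 2 := by
        gcongr
        exact hC.card_filter_forall_simplicial_mem_support_le_two hR ho hoc hdisj

/-- If `G` contains `r ≥ 1` `T`-regions (given by the embeddings `φ k`) which
all share one common vertex `c`, an outer vertex of each of them, and which
are otherwise pairwise disjoint, then every cycle of `G` contains at most
`2r + 2` of the `3r` simplicial vertices belonging to these `T`-regions. -/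
theorem cycle_misses_simplicial_vertices_of_shared_T_regions
    {V : Type*} [Fintype V] (G : SimpleGraph V) (r : ℕ) (hr : 1 ≤ r)
    (φ : Fin r → Fin 9 → V)
    (hinj : ∀ k, Function.Injective (φ k))
    (hind : ∀ k i j, G.Adj (φ k i) (φ k j) ↔ TGraph.Adj i j)
    (hclosed : ∀ k, ∀ i : Fin 9, 3 ≤ i.1 → ∀ v, G.Adj (φ k i) v → v ∈ Set.range (φ k))
    (c : V)
    (houter : ∀ k, ∃ i : Fin 9, i.1 < 3 ∧ φ k i = c)
    (hdisj : ∀ k l, k ≠ l → Set.range (φ k) ∩ Set.range (φ l) = {c})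
    (u : V) (C : G.Walk u u) (hC : C.IsCycle) :
    {v | v ∈ C.support ∧ ∃ (k : Fin r) (i : Fin 9), 6 ≤ i.1 ∧ v = φ k i}.ncard
      ≤ 2 * r + 2 :=
  cycle_misses_simplicial_vertices_of_shared_T_regions_general G r φ hinj hind hclosed c houter
    hdisj u C hC
end

section
/- Every cycle in the graph F₂,₀ contains at most 5 of its 6 white (simplicial) vertices. -/
/-- The graph `F₂,₀` on 15 vertices: `0,1,2` are the black triangle vertices
`b₁,b₂,b₃`; the first copy of the non-outer part of `T` has `g`-vertices
`3,4,5` and white (simplicial) vertices `6,7,8`; the second copy has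
`g`-vertices `9,10,11` and white (simplicial) vertices `12,13,14`. -/
def F20 : SimpleGraph (Fin 15) :=
  SimpleGraph.fromRel fun a b =>
    (a, b) ∈ ([(0,1),(0,2),(1,2),
      (3,4),(3,5),(4,5),(3,0),(3,1),(4,1),(4,2),(5,2),(5,0),
      (6,0),(6,1),(6,3),(7,1),(7,2),(7,4),(8,2),(8,0),(8,5),
      (9,10),(9,11),(10,11),(9,0),(9,1),(10,1),(10,2),(11,2),(11,0),
      (12,0),(12,1),(12,9),(13,1),(13,2),(13,10),(14,2),(14,0),(14,11)] :
        List (Fin 15 × Fin 15))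

/-!
Suppose a cycle passes through all six white vertices. A white vertex has three neighbours, only
one of which is not black, so it sends at least one cycle edge to the black triangle. The three
black vertices absorb at most six cycle edges, so this count is tight: both cycle edges at a black
vertex go to white vertices, and every white vertex also uses the edge to its `g`-vertex. Each
`g`-vertex of the first copy then has exactly one further cycle edge, which can only run inside
the triangle `g₁g₂g₃`. So the cycle induces a perfect matching on a triangle, which is absurd
since a triangle has an odd number of vertices.
-/

open Finset SimpleGraph

namespace Finset

variable {α β : Type*} {s : Finset α} {t : Finset β} (r : α → β → Prop) [∀ a b, Decidable (r a b)]
  {m n : ℕ}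

theorem card_bipartiteAbove_eq_and_card_bipartiteBelow_eq_of_card_mul_eq
    (hm : ∀ a ∈ s, m ≤ #(t.bipartiteAbove r a)) (hn : ∀ b ∈ t, #(s.bipartiteBelow r b) ≤ n)
    (h : #s * m = #t * n) :
    (∀ a ∈ s, #(t.bipartiteAbove r a) = m) ∧ ∀ b ∈ t, #(s.bipartiteBelow r b) = n := by
  have hsum := sum_card_bipartiteAbove_eq_sum_card_bipartiteBelow (s := s) (t := t) r
  have hlow : ∑ _a ∈ s, m ≤ ∑ a ∈ s, #(t.bipartiteAbove r a) := sum_le_sum hm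
  have hup : ∑ b ∈ t, #(s.bipartiteBelow r b) ≤ ∑ _b ∈ t, n := sum_le_sum hn
  simp only [sum_const, smul_eq_mul] at hlow hup
  constructor
  · intro a ha
    refine (((sum_eq_sum_iff_of_le hm).mp ?_) a ha).symm
    simp only [sum_const, smul_eq_mul]
    omega
  · intro b hb
    refine ((sum_eq_sum_iff_of_le hn).mp ?_) b hb
    simp only [sum_const, smul_eq_mul]
    omega

end Finset

theorem SimpleGraph.IsCycles.ncard_neighborSet_le_two {V : Type*} {G : SimpleGraph V}
    (h : G.IsCycles) (v : V) : (G.neighborSet v).ncard ≤ 2 := by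
  rcases (G.neighborSet v).eq_empty_or_nonempty with he | hne
  · simp [he]
  · exact (h hne).le

namespace F20

def blacks : Finset (Fin 15) := {0, 1, 2}

def whites : Finset (Fin 15) := {6, 7, 8, 12, 13, 14}

/-- The triangle `g₁g₂g₃` of the first copy. -/
def triangle : Finset (Fin 15) := {3, 4, 5}

instance : DecidableRel F20.Adj := fun a b => by
  unfold F20
  rw [fromRel_adj]
  infer_instance

theorem eq_of_adj_of_notMem_blacks :
    ∀ w ∈ whites, ∀ x y, F20.Adj w x → F20.Adj w y → x ∉ blacks → y ∉ blacks → x = y := by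
  decide

theorem exists_white_adj_of_mem_triangle : ∀ v ∈ triangle, ∃ w ∈ whites, F20.Adj v w ∧
    ∀ x, F20.Adj v x → x ∈ blacks ∨ x ∈ triangle ∨ x = w := by
  decide

theorem notMem_blacks_of_mem_triangle : ∀ v ∈ triangle, v ∉ blacks := by decide

theorem notMem_whites_of_mem_triangle : ∀ v ∈ triangle, v ∉ whites := by decide

variable {K : SimpleGraph (Fin 15)}

theorem exists_black_adj_of_mem_whites (hK : K ≤ F20) (hcyc : K.IsCycles) {w : Fin 15}
    (hw : w ∈ whites) (hne : (K.neighborSet w).Nonempty) : ∃ b ∈ blacks, K.Adj w b := by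
  obtain ⟨x, y, hxy, hxy_eq⟩ := Set.ncard_eq_two.mp (hcyc hne)
  have hx : x ∈ K.neighborSet w := by simp [hxy_eq]
  have hy : y ∈ K.neighborSet w := by simp [hxy_eq]
  by_contra! h
  exact hxy (eq_of_adj_of_notMem_blacks w hw x y (hK hx) (hK hy)
    (fun hb => h x hb hx) (fun hb => h y hb hy))

open Classical in
theorem card_black_adj_eq_one_and_card_white_adj_eq_two (hK : K ≤ F20) (hcyc : K.IsCycles)
    (hwhite : ∀ w ∈ whites, (K.neighborSet w).Nonempty) :
    (∀ w ∈ whites, #{b ∈ blacks | K.Adj w b} = 1) ∧ ∀ b ∈ blacks, #{w ∈ whites | K.Adj w b} = 2 :=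
  card_bipartiteAbove_eq_and_card_bipartiteBelow_eq_of_card_mul_eq K.Adj
    (fun w hw => by
      obtain ⟨b, hb, hwb⟩ := exists_black_adj_of_mem_whites hK hcyc hw (hwhite w hw)
      exact card_pos.mpr ⟨b, (mem_bipartiteAbove _).mpr ⟨hb, hwb⟩⟩)
    (fun b _ => calc
      #{w ∈ whites | K.Adj w b}
          = (({w ∈ whites | K.Adj w b} : Finset (Fin 15)) : Set (Fin 15)).ncard :=
            (Set.ncard_coe_finset _).symm
      _ ≤ (K.neighborSet b).ncard :=
            Set.ncard_le_ncard (fun w hw => (mem_filter.mp hw).2.symm) (Set.toFinite _)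
      _ ≤ 2 := hcyc.ncard_neighborSet_le_two b)
    rfl

theorem mem_whites_of_adj_black (hK : K ≤ F20) (hcyc : K.IsCycles)
    (hwhite : ∀ w ∈ whites, (K.neighborSet w).Nonempty) {b x : Fin 15} (hb : b ∈ blacks)
    (hbx : K.Adj b x) : x ∈ whites := by
  classical
  by_contra hx
  set S : Finset (Fin 15) := {w ∈ whites | K.Adj w b}
  have hS : #S = 2 := (card_black_adj_eq_one_and_card_white_adj_eq_two hK hcyc hwhite).2 b hb
  have hsub : (insert x S : Set (Fin 15)) ⊆ K.neighborSet b := by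
    rintro y (rfl | hy)
    · exact hbx
    · exact (mem_filter.mp hy).2.symm
  have := (Set.ncard_le_ncard hsub (Set.toFinite _)).trans (hcyc.ncard_neighborSet_le_two b)
  rw [Set.ncard_insert_of_notMem (fun h => hx (mem_filter.mp h).1), Set.ncard_coe_finset,
    hS] at this
  omega

theorem adj_of_mem_whites_of_notMem_blacks (hK : K ≤ F20) (hcyc : K.IsCycles)
    (hwhite : ∀ w ∈ whites, (K.neighborSet w).Nonempty) {w x : Fin 15} (hw : w ∈ whites)
    (hx : x ∉ blacks) (hwx : F20.Adj w x) : K.Adj w x := by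
  classical
  obtain ⟨a, c, hac, hac_eq⟩ := Set.ncard_eq_two.mp (hcyc (hwhite w hw))
  have ha : K.Adj w a := by simp [← mem_neighborSet, hac_eq]
  have hc : K.Adj w c := by simp [← mem_neighborSet, hac_eq]
  have hS : #{b ∈ blacks | K.Adj w b} = 1 :=
    (card_black_adj_eq_one_and_card_white_adj_eq_two hK hcyc hwhite).1 w hw
  have hnonblack : a ∉ blacks ∨ c ∉ blacks := by
    by_contra! h
    have hsub : {a, c} ⊆ ({b ∈ blacks | K.Adj w b} : Finset (Fin 15)) := by
      simp [insert_subset_iff, h.1, h.2, ha, hc]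
    have := card_le_card hsub
    rw [card_pair hac, hS] at this
    omega
  rcases hnonblack with h | h
  · rwa [eq_of_adj_of_notMem_blacks w hw x a hwx (hK ha) hx h]
  · rwa [eq_of_adj_of_notMem_blacks w hw x c hwx (hK hc) hx h]

theorem isMatching_induce_triangle (hK : K ≤ F20) (hcyc : K.IsCycles)
    (hwhite : ∀ w ∈ whites, (K.neighborSet w).Nonempty) :
    ((⊤ : K.Subgraph).induce triangle).IsMatching := by
  intro v hv
  obtain ⟨w, hw, hvw, hnbr⟩ := exists_white_adj_of_mem_triangle v hv
  have hKvw : K.Adj v w := (adj_of_mem_whites_of_notMem_blacks hK hcyc hwhite hw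
    (notMem_blacks_of_mem_triangle v hv) hvw.symm).symm
  have hmem : ∀ u, K.Adj v u → w ≠ u → u ∈ triangle := fun u hvu hwu => by
    rcases hnbr u (hK hvu) with hu | hu | rfl
    · exact absurd (mem_whites_of_adj_black hK hcyc hwhite hu hvu.symm)
        (notMem_whites_of_mem_triangle v hv)
    · exact hu
    · exact absurd rfl hwu
  obtain ⟨u, ⟨hwu, hvu⟩, huniq⟩ := hcyc.existsUnique_ne_adj hKvw
  refine ⟨u, ⟨hv, hmem u hvu hwu, hvu⟩, fun y ⟨_, hy, hvy⟩ => huniq y ⟨?_, hvy⟩⟩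
  rintro rfl
  exact notMem_whites_of_mem_triangle _ hy hw

theorem not_isCycles_of_whites_nonisolated (hK : K ≤ F20)
    (hwhite : ∀ w ∈ whites, (K.neighborSet w).Nonempty) : ¬ K.IsCycles := by
  intro hcyc
  have : Fintype ((⊤ : K.Subgraph).induce triangle).verts := Fintype.ofFinite _
  have := (isMatching_induce_triangle hK hcyc hwhite).even_card
  simp [triangle, Nat.even_iff] at this

end F20

/-- Every cycle in the graph `F₂,₀` contains at most 5 of its 6 white
(simplicial) vertices `6,7,8,12,13,14`. -/
theorem F20_cycle_at_most_five_white_vertices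
    (u : Fin 15) (C : F20.Walk u u) (hC : C.IsCycle) :
    {v | v ∈ C.support ∧ v ∈ ({6, 7, 8, 12, 13, 14} : Set (Fin 15))}.ncard ≤ 5 := by
  have hwhites : ({6, 7, 8, 12, 13, 14} : Set (Fin 15)) = F20.whites := by simp [F20.whites]
  rw [hwhites]
  by_contra! h
  have hall : {v | v ∈ C.support ∧ v ∈ (F20.whites : Set (Fin 15))} = F20.whites :=
    Set.eq_of_subset_of_ncard_le (fun v hv => hv.2) (by rw [Set.ncard_coe_finset]; exact h)
  refine F20.not_isCycles_of_whites_nonisolated C.toSubgraph.spanningCoe_le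
    (fun w hw => Set.nonempty_of_ncard_ne_zero ?_) hC.isCycles_spanningCoe_toSubgraph
  rw [← Finset.mem_coe, ← hall] at hw
  exact (hC.ncard_neighborSet_toSubgraph_eq_two hw.1).trans_ne two_ne_zero
end

section
/- Define f₂(n) = 1 + 14·(1 + 6 + 6² + … + 6ⁿ) and c₂(n) = 1 + 13·(1 + 5 + 5² + … + 5ⁿ) for natural numbers n. Then the sequence log(c₂(n)) / log(f₂(n)) converges, as n → ∞, to log 5 / log 6 (equivalently, log_{f₂(n)} c₂(n) → log₆ 5). -/
/-!
Both `f₂(n)` and `c₂(n)` are, up to a constant factor, pure powers: `1 + c(1 + r + ⋯ + rⁿ⁻¹)`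
is asymptotic to `c/(r - 1) · rⁿ`. Hence `log c₂(n) ∼ n log 5` and `log f₂(n) ∼ n log 6`, and
their quotient tends to `log 5 / log 6`.
-/

open Filter Real Topology Finset

theorem tendsto_one_add_mul_geom_sum_div_pow {r : ℝ} (hr : 1 < r) (c : ℝ) :
    Tendsto (fun n : ℕ => (1 + c * ∑ k ∈ range n, r ^ k) / r ^ n) atTop
      (𝓝 (c / (r - 1))) := by
  have hr₀ : r ≠ 0 := by positivity
  have hr₁ : r - 1 ≠ 0 := sub_ne_zero.mpr hr.ne'
  have hform : ∀ n : ℕ, (1 + c * ∑ k ∈ range n, r ^ k) / r ^ n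
      = (1 - c / (r - 1)) * r⁻¹ ^ n + c / (r - 1) := fun n => by
    rw [geom_sum_eq hr.ne', inv_pow]
    field_simp
    ring
  have hpow : Tendsto (fun n : ℕ => r⁻¹ ^ n) atTop (𝓝 0) :=
    tendsto_pow_atTop_nhds_zero_of_lt_one (by positivity) (inv_lt_one_of_one_lt₀ hr)
  simpa [hform] using (hpow.const_mul (1 - c / (r - 1))).add_const (c / (r - 1))

theorem tendsto_log_div_natCast_of_tendsto_div_pow {a : ℕ → ℝ} {r L : ℝ} (hr : r ≠ 0)
    (hL : L ≠ 0) (ha : Tendsto (fun n => a n / r ^ n) atTop (𝓝 L)) :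
    Tendsto (fun n : ℕ => log (a n) / n) atTop (𝓝 (log r)) := by
  have hlog : Tendsto (fun n => log (a n / r ^ n)) atTop (𝓝 (log L)) :=
    (continuousAt_log hL).tendsto.comp ha
  have herr : Tendsto (fun n : ℕ => log (a n / r ^ n) / n) atTop (𝓝 0) :=
    hlog.div_atTop tendsto_natCast_atTop_atTop
  have hsplit : ∀ᶠ n : ℕ in atTop, log (a n / r ^ n) / n + log r = log (a n) / n := by
    filter_upwards [ha.eventually_ne hL, eventually_ne_atTop 0] with n hn hn₀
    have ha₀ : a n ≠ 0 := fun h => hn (by simp [h])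
    rw [log_div ha₀ (pow_ne_zero n hr), log_pow]
    field_simp
    ring
  simpa using (herr.add_const (log r)).congr' hsplit

theorem tendsto_log_one_add_mul_geom_sum_div_natCast {r c : ℝ} (hr : 1 < r) (hc : c ≠ 0) :
    Tendsto (fun n : ℕ => log (1 + c * ∑ k ∈ range n, r ^ k) / n) atTop (𝓝 (log r)) :=
  tendsto_log_div_natCast_of_tendsto_div_pow (by positivity)
    (div_ne_zero hc (sub_ne_zero.mpr hr.ne')) (tendsto_one_add_mul_geom_sum_div_pow hr c)

/-- With `f₂(n) = 1 + 14(1 + 6 + ⋯ + 6ⁿ)` (the order of `F₂,ₙ`) and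
`c₂(n) = 1 + 13(1 + 5 + ⋯ + 5ⁿ)` (the length of a longest cycle of `F₂,ₙ`),
the sequence `log c₂(n) / log f₂(n)` converges to `log₆ 5`. -/
theorem shortness_limit_F2 :
    Tendsto
      (fun n : ℕ =>
        Real.log (1 + 13 * ∑ k ∈ Finset.range (n + 1), (5 : ℝ) ^ k) /
        Real.log (1 + 14 * ∑ k ∈ Finset.range (n + 1), (6 : ℝ) ^ k))
      atTop (nhds (Real.log 5 / Real.log 6)) := by
  have hshift {r c : ℝ} (hr : 1 < r) (hc : c ≠ 0) :=
    (tendsto_log_one_add_mul_geom_sum_div_natCast hr hc).comp (tendsto_add_atTop_nat 1)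
  have hlim := (hshift (r := 5) (c := 13) (by norm_num) (by norm_num)).div
    (hshift (r := 6) (c := 14) (by norm_num) (by norm_num)) (log_pos (by norm_num)).ne'
  refine hlim.congr fun n => ?_
  simp only [Function.comp_apply, Pi.div_apply]
  exact div_div_div_cancel_right₀ (by positivity) _ _
end
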